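/- arXiv:2310.20560 — 7 statements merged into one kernel-verified Lean document; each statement's English description precedes it below -/
import Mathlib

section
/- Fix x ∈ ℝ⁴ and for v⃗ ∈ ℝ³ set v⁰ = (1+|v⃗|²)^{1/2}, v = (v⁰, v⃗), and Ψ(v⃗) = e^{-i x·v} = e^{-i(x⁰v⁰ − x⃗·v⃗)}. If |x|² − (x·x)((v⁰)²+|v⃗|²) ≠ 0, then Ψ(v⃗) = −2i v⁰ · (x⁰ v⃗ + v⁰ x⃗) · ∇_{v⃗} Ψ(v⃗) / (|x|² − (x·x)((v⁰)²+|v⃗|²)), where ∇_{v⃗} is the gradient with respect to v⃗ ∈ ℝ³ and · on the left of ∇ is the Euclidean dot product in ℝ³. -/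
/-!
The phase `φ(w) = x⁰ √(1 + |w|²) − x⃗·w` has gradient `(x⁰/v⁰) v⃗ − x⃗` at `v⃗`, so the derivative of
`Ψ = e^{-iφ}` in the direction `u = x⁰ v⃗ + v⁰ x⃗` is `−i Ψ (x⁰²|v⃗|² − (v⁰)²|x⃗|²) / v⁰`.
Using `(v⁰)² = 1 + |v⃗|²`, the denominator `|x|² − (x·x)((v⁰)² + |v⃗|²)` equals
`2((v⁰)²|x⃗|² − x⁰²|v⃗|²)`, which is exactly `−2i v⁰` times that derivative divided by `Ψ`.
-/

open Real Complex
open scoped InnerProductSpace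

noncomputable section

abbrev V3 := EuclideanSpace ℝ (Fin 3)

section InnerProductSpace

variable {E : Type*} [NormedAddCommGroup E] [InnerProductSpace ℝ E]

theorem hasFDerivAt_sqrt_one_add_norm_sq (v : E) :
    HasFDerivAt (fun w : E => √(1 + ‖w‖ ^ 2)) ((√(1 + ‖v‖ ^ 2))⁻¹ • innerSL ℝ v) v := by
  have hpos : 0 < 1 + ‖v‖ ^ 2 := by positivity
  refine (((hasFDerivAt_id v).norm_sq.const_add 1).sqrt hpos.ne').congr_fderiv ?_
  ext u
  simp
  field_simp

theorem hasFDerivAt_minkowski_phase (x0 : ℝ) (xv v : E) :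
    HasFDerivAt (fun w : E => x0 * √(1 + ‖w‖ ^ 2) - ⟪xv, w⟫_ℝ)
      ((x0 / √(1 + ‖v‖ ^ 2)) • innerSL ℝ v - innerSL ℝ xv) v := by
  rw [div_eq_mul_inv, ← smul_smul]
  exact ((hasFDerivAt_sqrt_one_add_norm_sq v).const_mul x0).sub (innerSL ℝ xv).hasFDerivAt

theorem minkowski_phase_deriv_apply (x0 : ℝ) {s : ℝ} (hs : s ≠ 0) (xv v : E) :
    ((x0 / s) • innerSL ℝ v - innerSL ℝ xv) (x0 • v + s • xv) =
      x0 ^ 2 * ‖v‖ ^ 2 / s - s * ‖xv‖ ^ 2 := by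
  simp only [sub_apply, smul_apply,
    innerSL_apply_apply, smul_eq_mul, inner_add_right, real_inner_smul_right,
    real_inner_self_eq_norm_sq, real_inner_comm v xv]
  field_simp
  ring

end InnerProductSpace

theorem fderiv_cexp_neg_I_mul_ofReal_apply {F : Type*} [NormedAddCommGroup F] [NormedSpace ℝ F]
    {φ : F → ℝ} {L : F →L[ℝ] ℝ} {v : F} (hφ : HasFDerivAt φ L v) (u : F) :
    fderiv ℝ (fun w => cexp (-I * (φ w : ℂ))) v u = -I * L u * cexp (-I * φ v) := by
  have hΨ : HasFDerivAt (fun w => cexp (-I * (φ w : ℂ)))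
      (cexp (-I * φ v) • (-I) • ofRealCLM.comp L) v :=
    ((ofRealCLM.hasFDerivAt.comp v hφ).const_mul (-I)).cexp
  rw [hΨ.fderiv]
  simp only [smul_apply, ContinuousLinearMap.comp_apply, ofRealCLM_apply,
    smul_eq_mul]
  ring

theorem exp_gradient_identity (x0 : ℝ) (xv v : V3)
    (h : (x0 ^ 2 + ‖xv‖ ^ 2) -
        (x0 ^ 2 - ‖xv‖ ^ 2) * (Real.sqrt (1 + ‖v‖ ^ 2) ^ 2 + ‖v‖ ^ 2) ≠ 0) :
    Complex.exp (-Complex.I * ((x0 * Real.sqrt (1 + ‖v‖ ^ 2) - ⟪xv, v⟫_ℝ : ℝ) : ℂ)) =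
      -2 * Complex.I * ((Real.sqrt (1 + ‖v‖ ^ 2) : ℝ) : ℂ) *
        fderiv ℝ
          (fun w : V3 =>
            Complex.exp (-Complex.I * ((x0 * Real.sqrt (1 + ‖w‖ ^ 2) - ⟪xv, w⟫_ℝ : ℝ) : ℂ)))
          v (x0 • v + Real.sqrt (1 + ‖v‖ ^ 2) • xv) /
        (((x0 ^ 2 + ‖xv‖ ^ 2) -
            (x0 ^ 2 - ‖xv‖ ^ 2) * (Real.sqrt (1 + ‖v‖ ^ 2) ^ 2 + ‖v‖ ^ 2) : ℝ) : ℂ) := by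
  have hs : √(1 + ‖v‖ ^ 2) ≠ 0 := (Real.sqrt_pos.mpr (by positivity)).ne'
  have hs_sq : √(1 + ‖v‖ ^ 2) ^ 2 = 1 + ‖v‖ ^ 2 := Real.sq_sqrt (by positivity)
  rw [fderiv_cexp_neg_I_mul_ofReal_apply (hasFDerivAt_minkowski_phase x0 xv v),
    minkowski_phase_deriv_apply x0 hs, eq_div_iff (ofReal_ne_zero.mpr h)]
  generalize √(1 + ‖v‖ ^ 2) = s at hs hs_sq ⊢
  have hden : (x0 ^ 2 + ‖xv‖ ^ 2) - (x0 ^ 2 - ‖xv‖ ^ 2) * (s ^ 2 + ‖v‖ ^ 2) =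
      -2 * s * (x0 ^ 2 * ‖v‖ ^ 2 / s - s * ‖xv‖ ^ 2) := by
    field_simp
    linear_combination (-x0 ^ 2 - ‖xv‖ ^ 2) * hs_sq
  rw [hden]
  generalize x0 ^ 2 * ‖v‖ ^ 2 / s - s * ‖xv‖ ^ 2 = a
  generalize cexp _ = Ψ
  push_cast
  linear_combination -2 * (s : ℂ) * a * Ψ * I_mul_I
end
end

section
/- For every λ > 0, r ∈ ℝ and integer k ≥ 2, the functions e_k satisfy ∂_r e_1(λ,r) = e^{-iλr²} and ∂_r e_k(λ,r) = e_{k-1}(λ,r); consequently ∂_r^k e_k(λ,r) = e^{-iλr²}, i.e. e_k is a k-th order primitive in r of e^{-iλr²}. -/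
/-!
Write `ω = e^{-iπ/4}`, `g(z) = e^{-iλz²}` and `M_n(r) = ∫₀^∞ sⁿ g(r + ωs) ds`, so that
`e_k = ((-1)^k/(k-1)!) ωᵏ M_{k-1}`. On the ray, `|g(r + ωs)| = e^{-λ(s² + √2 rs)}` is dominated
by a real Gaussian in `s`, locally uniformly in `r`, which justifies differentiating under the
integral. Since `∂_r g(r + ωs) = ω⁻¹ ∂_s g(r + ωs)`, an integration by parts in `s` then gives
`M_0' = -ω⁻¹ g(r)` and `M_{n+1}' = -(n+1) ω⁻¹ M_n`, which is exactly `e_1' = g` and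
`e_{k+1}' = e_k`.
-/

open Real Complex MeasureTheory

noncomputable section

/-- `e_k(λ,r) = ((−1)^k/(k−1)!) e^{−ikπ/4} ∫₀^∞ s^{k−1} exp(−iλ(r+e^{−iπ/4}s)²) ds`. -/
def ek (k : ℕ) (lam r : ℝ) : ℂ :=
  ((-1) ^ k / (Nat.factorial (k - 1) : ℂ)) * Complex.exp (-Complex.I * k * π / 4) *
    ∫ s in Set.Ioi (0 : ℝ),
      (s : ℂ) ^ (k - 1) *
        Complex.exp (-Complex.I * lam * ((r : ℂ) + Complex.exp (-Complex.I * π / 4) * s) ^ 2)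

open Set Filter Topology

lemma integrableOn_pow_mul_exp_neg_mul_sq {b : ℝ} (hb : 0 < b) (n : ℕ) :
    IntegrableOn (fun s : ℝ => s ^ n * rexp (-b * s ^ 2)) (Ioi 0) := by
  simpa only [Real.rpow_natCast] using
    integrableOn_rpow_mul_exp_neg_mul_sq hb (s := n) (by linarith [n.cast_nonneg (α := ℝ)])

lemma tendsto_pow_mul_exp_neg_mul_sq {b : ℝ} (hb : 0 < b) (n : ℕ) :
    Tendsto (fun s : ℝ => s ^ n * rexp (-b * s ^ 2)) atTop (𝓝 0) := by
  have h := (rpow_mul_exp_neg_mul_sq_isLittleO_exp_neg hb n).tendsto_zero_of_tendsto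
    (tendsto_exp_atBot.comp (tendsto_id.const_mul_atTop_of_neg (by norm_num : -(1 / 2 : ℝ) < 0)))
  simpa only [Real.rpow_natCast] using h

def ω : ℂ := cexp (-I * π / 4)

lemma ω_re : ω.re = √2 / 2 := by
  rw [ω, show -I * π / 4 = ((-(π / 4) : ℝ) : ℂ) * I by push_cast; ring,
    exp_ofReal_mul_I_re, Real.cos_neg, Real.cos_pi_div_four]

lemma ω_im : ω.im = -(√2 / 2) := by
  rw [ω, show -I * π / 4 = ((-(π / 4) : ℝ) : ℂ) * I by push_cast; ring,
    exp_ofReal_mul_I_im, Real.sin_neg, Real.sin_pi_div_four]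

lemma ω_ne_zero : ω ≠ 0 := Complex.exp_ne_zero _

lemma norm_ω : ‖ω‖ = 1 := by
  rw [ω, Complex.norm_exp]
  norm_num [Complex.div_re]

lemma exp_neg_I_mul_nat_mul_pi_div_four (k : ℕ) : cexp (-I * k * π / 4) = ω ^ k := by
  rw [ω, ← Complex.exp_nat_mul]
  ring_nf

def gauss (lam : ℝ) (z : ℂ) : ℂ := cexp (-I * lam * z ^ 2)

lemma hasDerivAt_gauss (lam : ℝ) (z : ℂ) :
    HasDerivAt (gauss lam) (-2 * I * lam * z * gauss lam z) z := by
  have h := ((hasDerivAt_pow 2 z).const_mul (-I * lam)).cexp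
  exact h.congr_deriv (by rw [gauss]; push_cast; ring)

lemma norm_gauss_ray (lam x s : ℝ) :
    ‖gauss lam (x + ω * s)‖ = rexp (-lam * s ^ 2 - √2 * lam * x * s) := by
  rw [gauss, Complex.norm_exp]
  congr 1
  simp only [pow_two, mul_re, mul_im, add_re, add_im, neg_re, neg_im, I_re, I_im, ofReal_re,
    ofReal_im, ω_re, ω_im]
  ring_nf
  rw [Real.sq_sqrt zero_le_two]
  ring

lemma norm_gauss_ray_le {lam : ℝ} (hlam : 0 ≤ lam) {x R s : ℝ} (hx : |x| ≤ R) (hs : 0 ≤ s) :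
    ‖gauss lam (x + ω * s)‖ ≤ rexp (lam * R ^ 2) * rexp (-(lam / 2) * s ^ 2) := by
  rw [norm_gauss_ray, ← Real.exp_add, Real.exp_le_exp]
  have hxR : -√2 * lam * x * s ≤ √2 * lam * R * s := by
    have := mul_le_mul_of_nonneg_left ((neg_le_abs x).trans hx) (by positivity : 0 ≤ √2 * lam * s)
    linarith
  have hsq : 0 ≤ lam * (s - √2 * R) ^ 2 := by positivity
  have h2 : lam * (s - √2 * R) ^ 2 = lam * s ^ 2 - 2 * (√2 * lam * R * s) + 2 * (lam * R ^ 2) := by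
    ring_nf; rw [Real.sq_sqrt zero_le_two]; ring
  linarith

def rayMoment (lam : ℝ) (n : ℕ) (r : ℝ) : ℂ :=
  ∫ s in Ioi (0 : ℝ), (s : ℂ) ^ n * gauss lam (r + ω * s)

lemma ek_eq_rayMoment (k : ℕ) (lam r : ℝ) :
    ek k lam r = (-1) ^ k / (k - 1).factorial * ω ^ k * rayMoment lam (k - 1) r := by
  rw [ek, exp_neg_I_mul_nat_mul_pi_div_four]
  rfl

lemma hasDerivAt_gauss_ray (lam r s : ℝ) :
    HasDerivAt (fun t : ℝ => gauss lam (r + ω * t))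
      (ω * (-2 * I * lam * (r + ω * s) * gauss lam (r + ω * s))) s := by
  have h : HasDerivAt (fun t : ℝ => (r : ℂ) + ω * t) ω s := by
    simpa using ((hasDerivAt_id s).ofReal_comp.const_mul ω).const_add (r : ℂ)
  exact ((hasDerivAt_gauss lam _).comp s h).congr_deriv (mul_comm _ _)

lemma hasDerivAt_gauss_ray_base (lam r s : ℝ) :
    HasDerivAt (fun x : ℝ => gauss lam (x + ω * s))
      (-2 * I * lam * (r + ω * s) * gauss lam (r + ω * s)) r := by
  have h : HasDerivAt (fun x : ℝ => (x : ℂ) + ω * s) 1 r := by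
    simpa using (hasDerivAt_id r).ofReal_comp.add_const (ω * s)
  exact ((hasDerivAt_gauss lam _).comp r h).congr_deriv (mul_one _)

section

variable {lam : ℝ}

lemma norm_pow_mul_gauss_ray_le (hlam : 0 ≤ lam) (n : ℕ) {x R s : ℝ} (hx : |x| ≤ R)
    (hs : 0 ≤ s) :
    ‖(s : ℂ) ^ n * gauss lam (x + ω * s)‖ ≤
      rexp (lam * R ^ 2) * (s ^ n * rexp (-(lam / 2) * s ^ 2)) := by
  rw [norm_mul, norm_pow, norm_real, Real.norm_of_nonneg hs, mul_left_comm]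
  exact mul_le_mul_of_nonneg_left (norm_gauss_ray_le hlam hx hs) (by positivity)

lemma norm_pow_mul_gauss_deriv_ray_le (hlam : 0 ≤ lam) (n : ℕ) {x R s : ℝ} (hx : |x| ≤ R)
    (hs : 0 ≤ s) :
    ‖(s : ℂ) ^ n * (-2 * I * lam * (x + ω * s) * gauss lam (x + ω * s))‖ ≤
      2 * lam * rexp (lam * R ^ 2) *
        (R * (s ^ n * rexp (-(lam / 2) * s ^ 2)) + s ^ (n + 1) * rexp (-(lam / 2) * s ^ 2)) := by
  have hfactor : ‖-2 * I * lam * (x + ω * s)‖ ≤ 2 * lam * (R + s) := by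
    have hray : ‖(x : ℂ) + ω * s‖ ≤ R + s := by
      calc ‖(x : ℂ) + ω * s‖ ≤ ‖(x : ℂ)‖ + ‖ω‖ * ‖(s : ℂ)‖ :=
            norm_add_le_of_le le_rfl (norm_mul_le _ _)
        _ = |x| + s := by rw [norm_ω, norm_real, norm_real, Real.norm_of_nonneg hs, one_mul]; rfl
        _ ≤ R + s := by linarith
    rw [norm_mul, norm_mul, norm_mul, norm_neg, norm_I, norm_real, Real.norm_of_nonneg hlam,
      Complex.norm_two, mul_one]
    exact mul_le_mul_of_nonneg_left hray (by positivity)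
  calc ‖(s : ℂ) ^ n * (-2 * I * lam * (x + ω * s) * gauss lam (x + ω * s))‖
      = ‖-2 * I * lam * (x + ω * s)‖ * ‖(s : ℂ) ^ n * gauss lam (x + ω * s)‖ := by
        rw [← norm_mul]; ring_nf
    _ ≤ 2 * lam * (R + s) * (rexp (lam * R ^ 2) * (s ^ n * rexp (-(lam / 2) * s ^ 2))) :=
        mul_le_mul hfactor (norm_pow_mul_gauss_ray_le hlam n hx hs) (norm_nonneg _)
          (by nlinarith [(abs_nonneg x).trans hx])
    _ = _ := by ring

lemma integrableOn_gauss_deriv_bound (hlam : 0 < lam) (n : ℕ) (R : ℝ) :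
    IntegrableOn (fun s : ℝ => 2 * lam * rexp (lam * R ^ 2) *
      (R * (s ^ n * rexp (-(lam / 2) * s ^ 2)) + s ^ (n + 1) * rexp (-(lam / 2) * s ^ 2)))
      (Ioi 0) :=
  ((((integrableOn_pow_mul_exp_neg_mul_sq (half_pos hlam) n).const_mul R).add
    (integrableOn_pow_mul_exp_neg_mul_sq (half_pos hlam) (n + 1))).const_mul _)

lemma integrableOn_pow_mul_gauss_ray (hlam : 0 < lam) (n : ℕ) (x : ℝ) :
    IntegrableOn (fun s : ℝ => (s : ℂ) ^ n * gauss lam (x + ω * s)) (Ioi 0) := by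
  refine Integrable.mono' ((integrableOn_pow_mul_exp_neg_mul_sq (half_pos hlam) n).const_mul
    (rexp (lam * |x| ^ 2))) (Continuous.aestronglyMeasurable (by unfold gauss; fun_prop)) ?_
  filter_upwards [ae_restrict_mem measurableSet_Ioi] with s hs
  exact norm_pow_mul_gauss_ray_le hlam.le n le_rfl (le_of_lt hs)

lemma integrableOn_pow_mul_gauss_deriv_ray (hlam : 0 < lam) (n : ℕ) (x : ℝ) :
    IntegrableOn (fun s : ℝ => (s : ℂ) ^ n * (-2 * I * lam * (x + ω * s) * gauss lam (x + ω * s)))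
      (Ioi 0) := by
  refine Integrable.mono' (integrableOn_gauss_deriv_bound hlam n |x|)
    (Continuous.aestronglyMeasurable (by unfold gauss; fun_prop)) ?_
  filter_upwards [ae_restrict_mem measurableSet_Ioi] with s hs
  exact norm_pow_mul_gauss_deriv_ray_le hlam.le n le_rfl (le_of_lt hs)

lemma tendsto_pow_mul_gauss_ray (hlam : 0 < lam) (n : ℕ) (x : ℝ) :
    Tendsto (fun s : ℝ => (s : ℂ) ^ n * gauss lam (x + ω * s)) atTop (𝓝 0) := by
  have h := (tendsto_pow_mul_exp_neg_mul_sq (half_pos hlam) n).const_mul (rexp (lam * |x| ^ 2))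
  rw [mul_zero] at h
  refine squeeze_zero_norm' ?_ h
  filter_upwards [eventually_ge_atTop 0] with s hs
  exact norm_pow_mul_gauss_ray_le hlam.le n le_rfl hs

lemma hasDerivAt_rayMoment (hlam : 0 < lam) (n : ℕ) (r : ℝ) :
    HasDerivAt (rayMoment lam n)
      (∫ s in Ioi (0 : ℝ), (s : ℂ) ^ n * (-2 * I * lam * (r + ω * s) * gauss lam (r + ω * s)))
      r := by
  have hball : ∀ x ∈ Metric.ball r 1, |x| ≤ |r| + 1 := fun x hx => by
    have := abs_sub_abs_le_abs_sub x r
    rw [Metric.mem_ball, Real.dist_eq] at hx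
    linarith
  refine (hasDerivAt_integral_of_dominated_loc_of_deriv_le
    (F := fun (x s : ℝ) => (s : ℂ) ^ n * gauss lam (x + ω * s))
    (F' := fun (x s : ℝ) => (s : ℂ) ^ n * (-2 * I * lam * (x + ω * s) * gauss lam (x + ω * s)))
    (Metric.ball_mem_nhds r one_pos)
    (Eventually.of_forall fun x => (integrableOn_pow_mul_gauss_ray hlam n x).aestronglyMeasurable)
    (integrableOn_pow_mul_gauss_ray hlam n r)
    (integrableOn_pow_mul_gauss_deriv_ray hlam n r).aestronglyMeasurable ?_
    (integrableOn_gauss_deriv_bound hlam n (|r| + 1)) ?_).2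
  · filter_upwards [ae_restrict_mem measurableSet_Ioi] with s hs x hx
    exact norm_pow_mul_gauss_deriv_ray_le hlam.le n (hball x hx) (le_of_lt hs)
  · exact Eventually.of_forall fun s x _ => (hasDerivAt_gauss_ray_base lam x s).const_mul _

lemma hasDerivAt_rayMoment_zero (hlam : 0 < lam) (r : ℝ) :
    HasDerivAt (rayMoment lam 0) (-ω⁻¹ * gauss lam r) r := by
  have hint := (integrableOn_pow_mul_gauss_deriv_ray hlam 0 r).const_mul ω
  simp only [pow_zero, one_mul] at hint
  have hftc := integral_Ioi_of_hasDerivAt_of_tendsto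
    (hasDerivAt_gauss_ray lam r 0).continuousAt.continuousWithinAt
    (fun s _ => hasDerivAt_gauss_ray lam r s) hint
    (by simpa using tendsto_pow_mul_gauss_ray hlam 0 r)
  convert hasDerivAt_rayMoment hlam 0 r using 1
  simp only [pow_zero, one_mul]
  rw [integral_const_mul] at hftc
  simp only [ofReal_zero, mul_zero, add_zero, zero_sub] at hftc
  rw [eq_comm, ← mul_right_inj' ω_ne_zero, hftc]
  field_simp [ω_ne_zero]

lemma hasDerivAt_rayMoment_succ (hlam : 0 < lam) (n : ℕ) (r : ℝ) :
    HasDerivAt (rayMoment lam (n + 1)) (-ω⁻¹ * (n + 1) * rayMoment lam n r) r := by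
  have hderiv : ∀ s : ℝ, HasDerivAt (fun t : ℝ => (t : ℂ) ^ (n + 1) * gauss lam (r + ω * t))
      ((n + 1) * ((s : ℂ) ^ n * gauss lam (r + ω * s)) + ω * ((s : ℂ) ^ (n + 1) *
        (-2 * I * lam * (r + ω * s) * gauss lam (r + ω * s)))) s := fun s => by
    have hpow : HasDerivAt (fun t : ℝ => (t : ℂ) ^ (n + 1)) ((n + 1) * (s : ℂ) ^ n) s := by
      simpa using (hasDerivAt_pow (n + 1) (s : ℂ)).comp_ofReal
    exact (hpow.mul (hasDerivAt_gauss_ray lam r s)).congr_deriv (by ring)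
  have hint₁ := (integrableOn_pow_mul_gauss_ray hlam n r).const_mul ((n : ℂ) + 1)
  have hint₂ := (integrableOn_pow_mul_gauss_deriv_ray hlam (n + 1) r).const_mul ω
  have hftc := integral_Ioi_of_hasDerivAt_of_tendsto (hderiv 0).continuousAt.continuousWithinAt
    (fun s _ => hderiv s) (hint₁.add hint₂) (tendsto_pow_mul_gauss_ray hlam (n + 1) r)
  rw [integral_add hint₁ hint₂, integral_const_mul, integral_const_mul] at hftc
  simp only [ofReal_zero, zero_pow n.succ_ne_zero, zero_mul, sub_zero] at hftc
  convert hasDerivAt_rayMoment hlam (n + 1) r using 1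
  rw [eq_comm, ← mul_right_inj' ω_ne_zero, eq_neg_of_add_eq_zero_right hftc, rayMoment]
  field_simp [ω_ne_zero]

lemma hasDerivAt_ek_one (hlam : 0 < lam) (r : ℝ) : HasDerivAt (ek 1 lam) (gauss lam r) r := by
  have hek : ek 1 lam = fun x => -ω * rayMoment lam 0 x := funext fun x => by
    rw [ek_eq_rayMoment]; simp
  rw [hek]
  exact ((hasDerivAt_rayMoment_zero hlam r).const_mul (-ω)).congr_deriv (by field_simp [ω_ne_zero])

lemma hasDerivAt_ek_add_two (hlam : 0 < lam) (n : ℕ) (r : ℝ) :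
    HasDerivAt (ek (n + 2) lam) (ek (n + 1) lam r) r := by
  have hek : ek (n + 2) lam = fun x => (-1) ^ (n + 2) / (n + 1).factorial * ω ^ (n + 2) *
      rayMoment lam (n + 1) x := funext fun x => ek_eq_rayMoment (n + 2) lam x
  rw [hek, ek_eq_rayMoment]
  refine ((hasDerivAt_rayMoment_succ hlam n r).const_mul _).congr_deriv ?_
  rw [Nat.factorial_succ]
  push_cast
  field_simp [ω_ne_zero]
  ring

lemma iterate_deriv_ek (hlam : 0 < lam) (n : ℕ) :
    deriv^[n + 1] (ek (n + 1) lam) = fun r : ℝ => gauss lam r := by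
  induction n with
  | zero => exact funext fun r => (hasDerivAt_ek_one hlam r).deriv
  | succ n ih =>
    rw [Function.iterate_succ_apply, ← ih]
    congr 1
    exact funext fun r => (hasDerivAt_ek_add_two hlam n r).deriv

end

theorem ek_primitive (lam : ℝ) (hlam : 0 < lam) :
    (∀ r : ℝ, deriv (fun r' : ℝ => ek 1 lam r') r =
        Complex.exp (-Complex.I * lam * (r : ℂ) ^ 2)) ∧
    (∀ k : ℕ, 2 ≤ k → ∀ r : ℝ,
        deriv (fun r' : ℝ => ek k lam r') r = ek (k - 1) lam r) ∧
    (∀ k : ℕ, 1 ≤ k → ∀ r : ℝ,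
        deriv^[k] (fun r' : ℝ => ek k lam r') r =
          Complex.exp (-Complex.I * lam * (r : ℂ) ^ 2)) := by
  refine ⟨fun r => (hasDerivAt_ek_one hlam r).deriv, fun k hk r => ?_, fun k hk r => ?_⟩
  · obtain ⟨n, rfl⟩ := Nat.exists_eq_add_of_le' hk
    exact (hasDerivAt_ek_add_two hlam n r).deriv
  · obtain ⟨n, rfl⟩ := Nat.exists_eq_add_of_le' hk
    exact congrFun (iterate_deriv_ek hlam n) r

end
end

section
/- Let m > 0 and p⃗, q⃗ ∈ ℝ³, and set p⁰ = ω_m(p⃗), q⁰ = ω_m(q⃗). Then |p⃗−q⃗|² − (p⁰−q⁰)² ≥ 4m²|p⃗−q⃗|²/(p⁰+q⁰)²; equivalently, for p = (p⁰,p⃗) and q = (q⁰,q⃗) on the mass-m hyperboloid, −(p−q)·(p−q) ≥ 4m²|p⃗−q⃗|²/(p⁰+q⁰)². -/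
/-!
Write `a = ω_m(p⃗)`, `b = ω_m(q⃗)`. Since `(a - b)(a + b) = |p⃗|² - |q⃗|² = (p⃗ - q⃗)·(p⃗ + q⃗)`,
Cauchy–Schwarz gives `(a - b)²(a + b)² ≤ |p⃗ - q⃗|² |p⃗ + q⃗|²`. As `ω_m(p⃗)` is the Euclidean norm
of `(m, p⃗)`, the triangle inequality for `(m, p⃗) + (m, q⃗) = (2m, p⃗ + q⃗)` gives
`4m² + |p⃗ + q⃗|² ≤ (a + b)²`. Combining the two bounds and dividing by `(a + b)²` yields the claim.
-/

open Real

noncomputable section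

section Minkowski

variable {E : Type*} [SeminormedAddCommGroup E]

theorem sqrt_sq_add_norm_sq_eq_norm_toLp (x : ℝ) (u : E) :
    √(x ^ 2 + ‖u‖ ^ 2) = ‖WithLp.toLp 2 (x, u)‖ := by
  simp [WithLp.prod_norm_eq_of_L2]

theorem sqrt_add_sq_add_norm_add_sq_le (x y : ℝ) (u v : E) :
    √((x + y) ^ 2 + ‖u + v‖ ^ 2) ≤ √(x ^ 2 + ‖u‖ ^ 2) + √(y ^ 2 + ‖v‖ ^ 2) := by
  simp only [sqrt_sq_add_norm_sq_eq_norm_toLp]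
  exact norm_add_le (WithLp.toLp 2 (x, u)) (WithLp.toLp 2 (y, v))

end Minkowski

section InnerProduct

variable {E : Type*} [NormedAddCommGroup E] [InnerProductSpace ℝ E]

theorem real_inner_sub_add (p q : E) : inner ℝ (p - q) (p + q) = ‖p‖ ^ 2 - ‖q‖ ^ 2 := by
  rw [inner_sub_left, inner_add_right, inner_add_right, real_inner_self_eq_norm_sq,
    real_inner_self_eq_norm_sq, real_inner_comm]
  ring

theorem sq_norm_sq_sub_norm_sq_le (p q : E) :
    (‖p‖ ^ 2 - ‖q‖ ^ 2) ^ 2 ≤ ‖p - q‖ ^ 2 * ‖p + q‖ ^ 2 := by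
  rw [← real_inner_sub_add, ← mul_pow, ← sq_abs]
  gcongr
  exact abs_real_inner_le_norm _ _

end InnerProduct

theorem hyperboloid_difference_bound (m : ℝ) (hm : 0 < m) (p q : V3) :
    4 * m ^ 2 * ‖p - q‖ ^ 2 /
        (Real.sqrt (m ^ 2 + ‖p‖ ^ 2) + Real.sqrt (m ^ 2 + ‖q‖ ^ 2)) ^ 2 ≤
      ‖p - q‖ ^ 2 - (Real.sqrt (m ^ 2 + ‖p‖ ^ 2) - Real.sqrt (m ^ 2 + ‖q‖ ^ 2)) ^ 2 := by
  set a := √(m ^ 2 + ‖p‖ ^ 2)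
  set b := √(m ^ 2 + ‖q‖ ^ 2)
  have hsum : (m + m) ^ 2 + ‖p + q‖ ^ 2 ≤ (a + b) ^ 2 :=
    (Real.sqrt_le_iff.mp (sqrt_add_sq_add_norm_add_sq_le m m p q)).2
  have hdiff : ((a - b) * (a + b)) ^ 2 ≤ ‖p - q‖ ^ 2 * ‖p + q‖ ^ 2 := by
    have hab : (a - b) * (a + b) = ‖p‖ ^ 2 - ‖q‖ ^ 2 := by
      rw [show (a - b) * (a + b) = a ^ 2 - b ^ 2 by ring, Real.sq_sqrt (by positivity),
        Real.sq_sqrt (by positivity)]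
      ring
    exact hab ▸ sq_norm_sq_sub_norm_sq_le p q
  rw [div_le_iff₀ (by positivity)]
  linear_combination hdiff + mul_le_mul_of_nonneg_left hsum (sq_nonneg ‖p - q‖)

end
end

section
/- Let m > 0, let χ: ℝ⁴ → ℂ be a Schwartz function, and let p = (p⁰,p⃗) with p⃗ ∈ ℝ³ and p⁰ = ω_m(p⃗). Then (2π)^{-2} ∫_{ℝ³} χ̂((p⃗·r⃗)/p⁰, r⃗) d³r⃗ = p⁰ ∫_ℝ χ(sp) ds, where the argument of χ̂ is the four-vector with time component (p⃗·r⃗)/p⁰ and space component r⃗, and χ(sp) is χ evaluated at the four-vector s·p. -/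
/-!
Shearing `x⃗ ↦ x⃗ + x⁰ p⃗/p⁰`, which preserves volume, turns the Minkowski phase `k·x` at
`k = ((p⃗·r⃗)/p⁰, r⃗)` into `-r⃗·y⃗`. Hence `χ̂` on that hyperplane is `(2π)⁻¹` times the
three-dimensional Fourier transform, at `r⃗/2π`, of `h(y⃗) = ∫ ψ(t, y⃗) dt`, where `ψ` is the sheared
`χ`. Integrating `𝓕 h` over all frequencies gives `h 0` by Fourier inversion, and
`h 0 = ∫ χ(t, t p⃗/p⁰) dt = p⁰ ∫ χ(sp) ds`. Inversion applies because `𝓕 h` is the restriction of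
the four-dimensional Fourier transform of the Schwartz function `ψ` to the hyperplane `k⁰ = 0`.
-/

open Real Complex MeasureTheory
open scoped InnerProductSpace

noncomputable section

/-- Minkowski-signature Fourier transform `χ̂(k) = (2π)^{-1} ∫ e^{i(k⁰x⁰ − k⃗·x⃗)} χ(x) dx`,
four-vectors represented as pairs `(x⁰, x⃗) : ℝ × V3`. -/
def minkFT (χ : ℝ × V3 → ℂ) (k : ℝ × V3) : ℂ :=
  (2 * (π : ℂ))⁻¹ *
    ∫ x : ℝ × V3, Complex.exp (Complex.I * ((k.1 * x.1 - ⟪k.2, x.2⟫_ℝ : ℝ) : ℂ)) * χ x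

open scoped FourierTransform SchwartzMap

theorem SchwartzMap.integrable_comp_of_antilipschitz {D E F : Type*}
    [NormedAddCommGroup D] [NormedSpace ℝ D] [MeasurableSpace D] [BorelSpace D]
    [SecondCountableTopology D] {μ : Measure D} [μ.HasTemperateGrowth]
    [NormedAddCommGroup E] [NormedSpace ℝ E] [NormedAddCommGroup F] [NormedSpace ℝ F]
    (f : 𝓢(E, F)) {g : D →L[ℝ] E} {K : NNReal} (hg : AntilipschitzWith K g) :
    Integrable (f ∘ g) μ :=
  (SchwartzMap.compCLMOfAntilipschitz ℝ g.hasTemperateGrowth hg f).integrable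

theorem SchwartzMap.continuous_integral_fst {U V E : Type*}
    [NormedAddCommGroup U] [NormedSpace ℝ U] [MeasurableSpace U] [BorelSpace U]
    [SecondCountableTopology U] {μ : Measure U} [μ.HasTemperateGrowth]
    [NormedAddCommGroup V] [NormedSpace ℝ V] [NormedAddCommGroup E] [NormedSpace ℝ E]
    (ψ : 𝓢(U × V, E)) : Continuous fun y => ∫ t, ψ (t, y) ∂μ := by
  set l := μ.integrablePower
  set C := 2 ^ l * (SchwartzMap.seminorm ℝ 0 0 ψ + SchwartzMap.seminorm ℝ l 0 ψ)
  have hdecay (t : U) (y : V) : ‖ψ (t, y)‖ ≤ C * (1 + ‖t‖) ^ (-(l : ℝ)) := by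
    have hpow : ‖t‖ ^ (0 + l) * ‖ψ (t, y)‖ ≤ SchwartzMap.seminorm ℝ l 0 ψ :=
      calc ‖t‖ ^ (0 + l) * ‖ψ (t, y)‖ ≤ ‖(t, y)‖ ^ l * ‖ψ (t, y)‖ := by
            rw [zero_add]; gcongr; exact norm_fst_le (t, y)
        _ ≤ _ := ψ.norm_pow_mul_le_seminorm ℝ l _
    simpa using pow_mul_le_of_le_of_pow_mul_le (norm_nonneg t) (norm_nonneg (ψ (t, y)))
      (ψ.norm_le_seminorm ℝ _) hpow
  refine continuous_of_dominated (fun y => ?_) (fun y => ae_of_all _ fun t => hdecay t y)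
    ((Measure.integrable_pow_neg_integrablePower μ).const_mul C) (ae_of_all _ fun t => ?_)
  · exact (ψ.continuous.comp (Continuous.prodMk_left y)).aestronglyMeasurable
  · exact ψ.continuous.comp (Continuous.prodMk_right t)

section FiberIntegral

variable {U V E : Type*}
  [NormedAddCommGroup U] [InnerProductSpace ℝ U] [FiniteDimensional ℝ U]
  [MeasurableSpace U] [BorelSpace U]
  [NormedAddCommGroup V] [InnerProductSpace ℝ V] [FiniteDimensional ℝ V]
  [MeasurableSpace V] [BorelSpace V]
  [NormedAddCommGroup E] [NormedSpace ℂ E]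

-- Lets instance search see through `volume = volume.prod volume`.
instance : (volume : Measure (U × V)).IsAddHaarMeasure :=
  Measure.prod.instIsAddHaarMeasure _ _

theorem Real.fourier_integral_fst_apply {f : U × V → E} (hf : Integrable f) (u : V) :
    𝓕 (fun y => ∫ t, f (t, y)) u = ∫ x, 𝐞 (-⟪x.2, u⟫_ℝ) • f x := by
  have hphase : Integrable (fun x : U × V => 𝐞 (-⟪x.2, u⟫_ℝ) • f x) := by
    have hc : Continuous fun x : U × V => 𝐞 (-⟪x.2, u⟫_ℝ) := by fun_prop
    rw [← integrable_norm_iff (hc.aestronglyMeasurable.fun_smul hf.1)]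
    simpa only [Circle.norm_smul] using hf.norm
  rw [Measure.volume_eq_prod] at hphase ⊢
  rw [Real.fourier_eq, integral_prod_symm _ hphase]
  simp_rw [Circle.smul_def, integral_smul]

theorem Real.fourier_integral_fst_eq_fourier_withLp {f : U × V → E} (hf : Integrable f) (u : V) :
    𝓕 (fun y => ∫ t, f (t, y)) u =
      𝓕 (f ∘ WithLp.ofLp : WithLp 2 (U × V) → E) (WithLp.toLp 2 (0, u)) := by
  rw [Real.fourier_integral_fst_apply hf, Real.fourier_eq]
  simp only [WithLp.prod_inner_apply, inner_zero_right, zero_add, Function.comp_apply]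
  exact ((WithLp.volume_preserving_symm_measurableEquiv_toLp_prod U V).integral_comp'
    (fun x => 𝐞 (-⟪x.2, u⟫_ℝ) • f x)).symm

theorem SchwartzMap.integrable_fourier_integral_fst (ψ : 𝓢(U × V, E)) :
    Integrable (𝓕 fun y => ∫ t, ψ (t, y)) := by
  let Ψ : 𝓢(WithLp 2 (U × V), E) :=
    SchwartzMap.compCLMOfContinuousLinearEquiv ℝ (WithLp.prodContinuousLinearEquiv 2 ℝ U V) ψ
  let ι : V →L[ℝ] WithLp 2 (U × V) :=
    (WithLp.prodContinuousLinearEquiv 2 ℝ U V).symm.toContinuousLinearMap ∘L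
      ContinuousLinearMap.inr ℝ U V
  have hι : Isometry ι := Isometry.of_dist_eq fun y₁ y₂ => WithLp.dist_toLp_snd 2 U V y₁ y₂
  have hfourier : (𝓕 fun y => ∫ t, ψ (t, y)) = ⇑(𝓕 Ψ : 𝓢(WithLp 2 (U × V), E)) ∘ ι := by
    ext u
    rw [SchwartzMap.fourier_coe]
    exact Real.fourier_integral_fst_eq_fourier_withLp ψ.integrable u
  rw [hfourier]
  exact (𝓕 Ψ).integrable_comp_of_antilipschitz hι.antilipschitz

theorem SchwartzMap.integral_fourier_integral_fst [CompleteSpace E] (ψ : 𝓢(U × V, E)) :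
    ∫ u, 𝓕 (fun y => ∫ t, ψ (t, y)) u = ∫ t, ψ (t, 0) := by
  have hinv := (ψ.integrable (μ := volume)).integral_prod_right.fourierInv_fourier_eq
    ψ.integrable_fourier_integral_fst (ψ.continuous_integral_fst (μ := volume)).continuousAt
      (v := 0)
  simpa [Real.fourierInv_eq] using hinv

end FiberIntegral

section Shear

variable {V : Type*} [NormedAddCommGroup V] [InnerProductSpace ℝ V]

def shearCLE (w : V) : (ℝ × V) ≃L[ℝ] ℝ × V :=
  (ContinuousLinearEquiv.refl ℝ ℝ).skewProd (ContinuousLinearEquiv.refl ℝ V)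
    ((ContinuousLinearMap.id ℝ ℝ).smulRight w)

@[simp]
theorem shearCLE_apply (w : V) (x : ℝ × V) : shearCLE w x = (x.1, x.2 + x.1 • w) := rfl

variable [FiniteDimensional ℝ V] [MeasurableSpace V] [BorelSpace V]

theorem measurePreserving_shearCLE (w : V) : MeasurePreserving (shearCLE w) := by
  rw [Measure.volume_eq_prod]
  exact (MeasurePreserving.id volume).skew_product (g := fun t y => y + t • w) (by fun_prop)
    (ae_of_all _ fun t => (measurePreserving_add_right volume (t • w)).map_eq)

theorem integral_exp_minkowski_eq_fourier {χ : ℝ × V → ℂ} (hχ : Integrable χ) (r w : V) :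
    ∫ x : ℝ × V, Complex.exp (Complex.I * ((⟪r, w⟫_ℝ * x.1 - ⟪r, x.2⟫_ℝ : ℝ) : ℂ)) * χ x =
      𝓕 (fun y => ∫ t, χ (t, y + t • w)) ((2 * π)⁻¹ • r) := by
  have hshear := measurePreserving_shearCLE w
  have hfourier := Real.fourier_integral_fst_apply (hshear.integrable_comp_of_integrable hχ)
    ((2 * π)⁻¹ • r)
  simp only [Function.comp_apply, shearCLE_apply] at hfourier
  rw [hfourier, ← hshear.integral_comp (shearCLE w).toHomeomorph.measurableEmbedding]
  congr 1 with x
  have hphase : ⟪r, w⟫_ℝ * x.1 - ⟪r, x.2 + x.1 • w⟫_ℝ = 2 * π * -⟪x.2, (2 * π)⁻¹ • r⟫_ℝ := by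
    rw [inner_add_right, real_inner_smul_right, real_inner_smul_right, real_inner_comm r x.2]
    field_simp
    ring
  simp only [shearCLE_apply, Circle.smul_def, Real.fourierChar_apply, smul_eq_mul, hphase]
  push_cast
  ring_nf

end Shear

theorem momentum_space_line_integral (m : ℝ) (hm : 0 < m)
    (χ : SchwartzMap (ℝ × V3) ℂ) (pv : V3) :
    ((2 * (π : ℂ))⁻¹) ^ 2 *
        (∫ r : V3, minkFT (fun x => χ x) (⟪pv, r⟫_ℝ / Real.sqrt (m ^ 2 + ‖pv‖ ^ 2), r)) =
      ((Real.sqrt (m ^ 2 + ‖pv‖ ^ 2) : ℝ) : ℂ) *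
        ∫ s : ℝ, χ (s * Real.sqrt (m ^ 2 + ‖pv‖ ^ 2), s • pv) := by
  set P := Real.sqrt (m ^ 2 + ‖pv‖ ^ 2)
  have hP : 0 < P := Real.sqrt_pos.2 (by positivity)
  set ψ : 𝓢(ℝ × V3, ℂ) := SchwartzMap.compCLMOfContinuousLinearEquiv ℝ (shearCLE (P⁻¹ • pv)) χ
  have hminkFT (r : V3) : minkFT χ (⟪pv, r⟫_ℝ / P, r) =
      (2 * (π : ℂ))⁻¹ * 𝓕 (fun y => ∫ t, ψ (t, y)) ((2 * π)⁻¹ • r) := by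
    have h := integral_exp_minkowski_eq_fourier χ.integrable r (P⁻¹ • pv)
    rw [real_inner_smul_right, real_inner_comm, ← div_eq_inv_mul] at h
    rw [minkFT, h]
    rfl
  have hline : ∫ t, ψ (t, 0) = P * ∫ s, χ (s * P, s • pv) := by
    have hscale (s : ℝ) : ψ (P * s, 0) = χ (s * P, s • pv) := by
      simp [ψ, smul_smul, mul_comm, hP.ne']
    simp_rw [← hscale, Measure.integral_comp_mul_left (fun t => ψ (t, 0)), abs_inv,
      abs_of_pos hP, Complex.real_smul, ← mul_assoc, ← Complex.ofReal_mul,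
      mul_inv_cancel₀ hP.ne', Complex.ofReal_one, one_mul]
  calc ((2 * (π : ℂ))⁻¹) ^ 2 * ∫ r : V3, minkFT χ (⟪pv, r⟫_ℝ / P, r)
      = ((2 * (π : ℂ))⁻¹) ^ 3 * ((2 * π) ^ 3 • ∫ u, 𝓕 (fun y => ∫ t, ψ (t, y)) u) := by
        simp_rw [hminkFT]
        rw [integral_const_mul, Measure.integral_comp_inv_smul_of_nonneg _ _ (by positivity),
          finrank_euclideanSpace_fin]
        ring
    _ = ∫ t, ψ (t, 0) := by
        rw [ψ.integral_fourier_integral_fst, Complex.real_smul]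
        push_cast
        field_simp
    _ = _ := hline

end
end

section
/- Let x ∈ ℝ⁴ with x·x < 0 (so x⃗ ≠ 0 and |x⁰| < |x⃗|), and let q ∈ ℝ⁴ with q·q > 0 and q⁰ > 0. Choose unit vectors e₁, e₂ ∈ ℝ³ such that {x⃗/|x⃗|, e₁, e₂} is orthonormal, and for φ ∈ [0,2π] set n̂(φ) = (x⁰/|x⃗|)(x⃗/|x⃗|) + (1−(x⁰/|x⃗|)²)^{1/2}(cos φ · e₁ + sin φ · e₂) ∈ S². Then q⁰ − q⃗·n̂(φ) > 0 for all φ, and ∫₀^{2π} (q⁰ − q⃗·n̂(φ))^{-1} dφ = 2π |x⃗| ((q·x)² − (q·q)(x·x))^{-1/2}. -/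
/-!
In the orthonormal frame `{x⃗/|x⃗|, e₁, e₂}` the denominator is a trigonometric polynomial,
`q⁰ − q⃗·n̂(φ) = a − b cos φ − c sin φ` with `a = q⁰ − x⁰ (q⃗·x⃗)/|x⃗|²` and
`(b, c) = (1 − (x⁰/|x⃗|)²)^{1/2} (q⃗·e₁, q⃗·e₂)`. Parseval's identity in that frame gives
`|x⃗|² (a² − b² − c²) = (q·x)² − (q·q)(x·x) > 0`, and `a > 0` because `|x⁰| < |x⃗|` and
`|q⃗| < q⁰`. So the denominator never vanishes, and the classical integral
`∫₀^{2π} (a − b cos φ − c sin φ)⁻¹ dφ = 2π / √(a² − b² − c²)` gives the result.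
-/

open Real MeasureTheory
open scoped InnerProductSpace

noncomputable section

/-- The unit vector `n̂(φ)` on the circle of null directions associated with `x`. -/
def nhat (x0 : ℝ) (xv e1 e2 : V3) (φ : ℝ) : V3 :=
  (x0 / ‖xv‖ ^ 2) • xv +
    Real.sqrt (1 - (x0 / ‖xv‖) ^ 2) • (Real.cos φ • e1 + Real.sin φ • e2)

section PoissonIntegral

variable {a b c r : ℝ}

theorem sub_mul_cos_sub_mul_sin_pos (ha : 0 < a) (habc : b ^ 2 + c ^ 2 < a ^ 2) (φ : ℝ) :
    0 < a - b * cos φ - c * sin φ := by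
  have hbound : (b * cos φ + c * sin φ) ^ 2 < a ^ 2 := by
    nlinarith [sq_nonneg (b * sin φ - c * cos φ), sin_sq_add_cos_sq φ]
  linarith [le_abs_self (b * cos φ + c * sin φ), abs_lt_of_sq_lt_sq hbound ha.le]

/-- The Weierstrass-substitution primitive of `(a - b cos φ - c sin φ)⁻¹`, `r = √(a² - b² - c²)`,
rewritten so that the `arctan` argument has denominator `r + (a - b cos φ - c sin φ) > 0`: it is
then smooth on all of `ℝ` and its `arctan` term is `2π`-periodic. -/
def poissonPrimitive (a b c r φ : ℝ) : ℝ :=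
  (φ + 2 * arctan ((b * sin φ - c * cos φ) / (r + a - b * cos φ - c * sin φ))) / r

theorem hasDerivAt_poissonPrimitive (ha : 0 < a) (hr : 0 < r)
    (hr2 : r ^ 2 = a ^ 2 - b ^ 2 - c ^ 2) (φ : ℝ) :
    HasDerivAt (poissonPrimitive a b c r) (a - b * cos φ - c * sin φ)⁻¹ φ := by
  have hN : HasDerivAt (fun φ => b * sin φ - c * cos φ) (b * cos φ + c * sin φ) φ := by
    exact (((hasDerivAt_sin φ).const_mul b).sub ((hasDerivAt_cos φ).const_mul c)).congr_deriv
      (by ring)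
  have hM : HasDerivAt (fun φ => r + a - b * cos φ - c * sin φ) (b * sin φ - c * cos φ) φ := by
    exact (((hasDerivAt_const φ (r + a)).sub ((hasDerivAt_cos φ).const_mul b)).sub
      ((hasDerivAt_sin φ).const_mul c)).congr_deriv (by ring)
  have hD : 0 < a - b * cos φ - c * sin φ := sub_mul_cos_sub_mul_sin_pos ha (by nlinarith) φ
  have hM0 : r + a - b * cos φ - c * sin φ ≠ 0 := by linarith
  refine (((hasDerivAt_id φ).add ((hN.div hM hM0).arctan.const_mul 2)).div_const r).congr_deriv ?_
  simp only [Pi.div_apply]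
  set D := a - b * cos φ - c * sin φ
  set N := b * sin φ - c * cos φ
  have hN2 : N ^ 2 = 2 * a * D - D ^ 2 - r ^ 2 := by
    linear_combination (b ^ 2 + c ^ 2) * sin_sq_add_cos_sq φ + hr2
  have hsum : 1 + (N / (r + D)) ^ 2 = 2 * D * (a + r) / (r + D) ^ 2 := by
    field_simp
    linear_combination hN2
  have hnum : (a - D) * (r + D) - N * N = (a + r) * (r - D) := by
    linear_combination -hN2
  rw [show r + a - b * cos φ - c * sin φ = r + D by ring,
    show b * cos φ + c * sin φ = a - D by ring, hsum, hnum]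
  field_simp
  ring

theorem integral_inv_sub_mul_cos_sub_mul_sin (ha : 0 < a) (habc : b ^ 2 + c ^ 2 < a ^ 2) :
    ∫ φ in (0 : ℝ)..(2 * π), (a - b * cos φ - c * sin φ)⁻¹ = 2 * π / √(a ^ 2 - b ^ 2 - c ^ 2) := by
  have hr : 0 < √(a ^ 2 - b ^ 2 - c ^ 2) := sqrt_pos.mpr (by linarith)
  have hr2 : √(a ^ 2 - b ^ 2 - c ^ 2) ^ 2 = a ^ 2 - b ^ 2 - c ^ 2 := sq_sqrt (by linarith)
  have hcont : Continuous fun φ => (a - b * cos φ - c * sin φ)⁻¹ :=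
    (by fun_prop : Continuous fun φ => a - b * cos φ - c * sin φ).inv₀
      fun φ => (sub_mul_cos_sub_mul_sin_pos ha habc φ).ne'
  rw [intervalIntegral.integral_eq_sub_of_hasDerivAt
    (fun φ _ => hasDerivAt_poissonPrimitive ha hr hr2 φ) (hcont.intervalIntegrable _ _)]
  simp [poissonPrimitive]
  ring

end PoissonIntegral

theorem Orthonormal.sum_sq_inner_left {ι E : Type*} [Fintype ι] [Nonempty ι]
    [NormedAddCommGroup E] [InnerProductSpace ℝ E] [FiniteDimensional ℝ E] {v : ι → E}
    (hv : Orthonormal ℝ v) (hcard : Fintype.card ι = Module.finrank ℝ E) (x : E) :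
    ∑ i, ⟪x, v i⟫_ℝ ^ 2 = ‖x‖ ^ 2 := by
  let b := (basisOfOrthonormalOfCardEqFinrank hv hcard).toOrthonormalBasis (by simpa using hv)
  have hb : ⇑b = v := by simp [b]
  rw [← b.sum_sq_inner_left x, hb]

theorem norm_sq_eq_of_orthonormal_frame {E : Type*} [NormedAddCommGroup E]
    [InnerProductSpace ℝ E] (hE : Module.finrank ℝ E = 3) {xv e1 e2 : E} (hX : xv ≠ 0)
    (he1 : ‖e1‖ = 1) (he2 : ‖e2‖ = 1) (h12 : ⟪e1, e2⟫_ℝ = 0)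
    (hx1 : ⟪xv, e1⟫_ℝ = 0) (hx2 : ⟪xv, e2⟫_ℝ = 0) (q : E) :
    ‖q‖ ^ 2 = (⟪q, xv⟫_ℝ / ‖xv‖) ^ 2 + ⟪q, e1⟫_ℝ ^ 2 + ⟪q, e2⟫_ℝ ^ 2 := by
  have : FiniteDimensional ℝ E := Module.finite_of_finrank_eq_succ hE
  have hframe : Orthonormal ℝ ![‖xv‖⁻¹ • xv, e1, e2] := by
    simp [Fin.forall_fin_succ, inner_smul_left, norm_smul, hX, he1, he2, h12, hx1, hx2]
  rw [← hframe.sum_sq_inner_left (by simp [hE]) q, Fin.sum_univ_three]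
  simp [inner_smul_right, div_eq_inv_mul]

theorem inner_nhat (x0 : ℝ) (xv e1 e2 qv : V3) (φ : ℝ) :
    ⟪qv, nhat x0 xv e1 e2 φ⟫_ℝ = x0 / ‖xv‖ ^ 2 * ⟪qv, xv⟫_ℝ +
      √(1 - (x0 / ‖xv‖) ^ 2) * ⟪qv, e1⟫_ℝ * cos φ +
      √(1 - (x0 / ‖xv‖) ^ 2) * ⟪qv, e2⟫_ℝ * sin φ := by
  simp only [nhat, inner_add_right, real_inner_smul_right]
  ring

theorem azimuthal_discriminant_eq {x0 X q0 Q p q1 q2 : ℝ} (hX : 0 < X) (hx : x0 ^ 2 ≤ X ^ 2)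
    (hQ : Q ^ 2 = (p / X) ^ 2 + q1 ^ 2 + q2 ^ 2) :
    (q0 - x0 / X ^ 2 * p) ^ 2 - (√(1 - (x0 / X) ^ 2) * q1) ^ 2 - (√(1 - (x0 / X) ^ 2) * q2) ^ 2 =
      ((q0 * x0 - p) ^ 2 - (q0 ^ 2 - Q ^ 2) * (x0 ^ 2 - X ^ 2)) / X ^ 2 := by
  have hs : √(1 - (x0 / X) ^ 2) ^ 2 = 1 - (x0 / X) ^ 2 := by
    refine sq_sqrt (sub_nonneg.mpr ?_)
    rw [div_pow, div_le_one (by positivity)]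
    exact hx
  rw [mul_pow, mul_pow, hs, hQ]
  field_simp
  ring

theorem div_norm_sq_mul_inner_lt {E : Type*} [NormedAddCommGroup E] [InnerProductSpace ℝ E]
    {x0 q0 : ℝ} {xv qv : E} (hx : |x0| < ‖xv‖) (hq : ‖qv‖ < q0) :
    x0 / ‖xv‖ ^ 2 * ⟪qv, xv⟫_ℝ < q0 := by
  have hX : 0 < ‖xv‖ := (abs_nonneg x0).trans_lt hx
  rw [div_mul_eq_mul_div, div_lt_iff₀ (by positivity)]
  calc x0 * ⟪qv, xv⟫_ℝ ≤ |x0| * |⟪qv, xv⟫_ℝ| := by rw [← abs_mul]; exact le_abs_self _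
    _ ≤ |x0| * (‖qv‖ * ‖xv‖) := by gcongr; exact abs_real_inner_le_norm qv xv
    _ < ‖xv‖ * (q0 * ‖xv‖) := by gcongr
    _ = q0 * ‖xv‖ ^ 2 := by ring

theorem lightcone_azimuthal_integral (x0 : ℝ) (xv : V3) (q0 : ℝ) (qv : V3)
    (hx : x0 ^ 2 - ‖xv‖ ^ 2 < 0) (hq : 0 < q0 ^ 2 - ‖qv‖ ^ 2) (hq0 : 0 < q0)
    (e1 e2 : V3) (he1 : ‖e1‖ = 1) (he2 : ‖e2‖ = 1) (h12 : ⟪e1, e2⟫_ℝ = 0)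
    (hx1 : ⟪xv, e1⟫_ℝ = 0) (hx2 : ⟪xv, e2⟫_ℝ = 0) :
    (∀ φ ∈ Set.Icc (0 : ℝ) (2 * π), 0 < q0 - ⟪qv, nhat x0 xv e1 e2 φ⟫_ℝ) ∧
    (∫ φ in (0 : ℝ)..(2 * π), (q0 - ⟪qv, nhat x0 xv e1 e2 φ⟫_ℝ)⁻¹) =
      2 * π * ‖xv‖ *
        ((q0 * x0 - ⟪qv, xv⟫_ℝ) ^ 2 -
            (q0 ^ 2 - ‖qv‖ ^ 2) * (x0 ^ 2 - ‖xv‖ ^ 2)) ^ (-(1 : ℝ) / 2) := by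
  have hx_abs : |x0| < ‖xv‖ := abs_lt_of_sq_lt_sq (by linarith) (norm_nonneg xv)
  have hq_norm : ‖qv‖ < q0 := lt_of_pow_lt_pow_left₀ 2 hq0.le (by linarith)
  have hX : 0 < ‖xv‖ := (abs_nonneg x0).trans_lt hx_abs
  set T := (q0 * x0 - ⟪qv, xv⟫_ℝ) ^ 2 - (q0 ^ 2 - ‖qv‖ ^ 2) * (x0 ^ 2 - ‖xv‖ ^ 2)
  have hT : 0 < T := by nlinarith [sq_nonneg (q0 * x0 - ⟪qv, xv⟫_ℝ)]
  have hdisc := azimuthal_discriminant_eq (x0 := x0) (q0 := q0) hX (by linarith)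
    (norm_sq_eq_of_orthonormal_frame finrank_euclideanSpace_fin (norm_pos_iff.mp hX)
      he1 he2 h12 hx1 hx2 qv)
  have hden : ∀ φ, q0 - ⟪qv, nhat x0 xv e1 e2 φ⟫_ℝ = (q0 - x0 / ‖xv‖ ^ 2 * ⟪qv, xv⟫_ℝ) -
      √(1 - (x0 / ‖xv‖) ^ 2) * ⟪qv, e1⟫_ℝ * cos φ - √(1 - (x0 / ‖xv‖) ^ 2) * ⟪qv, e2⟫_ℝ * sin φ :=
    fun φ => by rw [inner_nhat]; ring
  have ha := sub_pos.mpr (div_norm_sq_mul_inner_lt hx_abs hq_norm)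
  have hdisc_pos := hdisc ▸ div_pos hT (pow_pos hX 2)
  refine ⟨fun φ _ => hden φ ▸ sub_mul_cos_sub_mul_sin_pos ha (by linarith) φ, ?_⟩
  simp only [hden]
  rw [integral_inv_sub_mul_cos_sub_mul_sin ha (by linarith), hdisc, sqrt_div hT.le,
    sqrt_sq hX.le, neg_div, rpow_neg hT.le, ← sqrt_eq_rpow]
  field_simp
end
end

section
/- Let q ∈ ℝ⁴ with q·q > 0, and let x ∈ ℝ⁴ with x·x < 0; set x̂ = x/(−x·x)^{1/2}. Then q·x̂ + ((q·x̂)² + q·q)^{1/2} > 0, and for every index a ∈ {0,1,2,3}: ∂/∂x^a [ log( q·x̂ + ((q·x̂)² + q·q)^{1/2} ) ] = q_a ((q·x)² − (q·q)(x·x))^{-1/2} − (q·x) x_a ((x·x)^{-1}) ((q·x)² − (q·q)(x·x))^{-1/2}, where q_a = η_{ab}q^b and x_a = η_{ab}x^b. -/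
/-!
`t ↦ log (t + √(t² + c))` is a shifted `arsinh`, with derivative `1 / √(t² + c)`. For
`t = q·x̂ = (q·x) / √(−x·x)` the square root collapses to `√((q·x)² − (q·q)(x·x)) / √(−x·x)`,
and this factor `√(−x·x)` cancels the one in the derivative of `x ↦ q·x̂`.
-/

open Real

noncomputable section

/-- Minkowski inner product on ℝ⁴ with signature `(+,−,−,−)`. -/
def mink4 (x y : Fin 4 → ℝ) : ℝ := x 0 * y 0 - x 1 * y 1 - x 2 * y 2 - x 3 * y 3

/-- Index lowering: `x_a = η_{ab} x^b`. -/
def low (x : Fin 4 → ℝ) (a : Fin 4) : ℝ := if a = 0 then x 0 else -(x a)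

lemma add_sqrt_sq_add_pos (t : ℝ) {c : ℝ} (hc : 0 < c) : 0 < t + √(t ^ 2 + c) := by
  have h : |t| < √(t ^ 2 + c) := (Real.lt_sqrt (abs_nonneg t)).2 (by rw [sq_abs]; linarith)
  linarith [neg_abs_le t]

lemma hasDerivAt_log_add_sqrt_sq_add (t : ℝ) {c : ℝ} (hc : 0 < c) :
    HasDerivAt (fun s => log (s + √(s ^ 2 + c))) (√(t ^ 2 + c))⁻¹ t := by
  have hpos := add_sqrt_sq_add_pos t hc
  refine (((hasDerivAt_id' t).add (((hasDerivAt_pow 2 t).add_const c).sqrt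
    (by positivity))).log hpos.ne').congr_deriv ?_
  have hr : 0 < √(t ^ 2 + c) := Real.sqrt_pos.2 (by positivity)
  simp only [Pi.add_apply, Nat.cast_ofNat]
  field_simp
  ring

lemma sqrt_sq_inv_sqrt_neg_mul_add {v : ℝ} (hv : v < 0) (u c : ℝ) :
    √(((√(-v))⁻¹ * u) ^ 2 + c) = √(u ^ 2 - c * v) / √(-v) := by
  rw [← Real.sqrt_div' _ (neg_nonneg.2 hv.le), mul_pow, inv_pow, Real.sq_sqrt (neg_nonneg.2 hv.le)]
  have hv0 : v ≠ 0 := hv.ne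
  congr 1
  field_simp
  ring

def mink4CLM (p : Fin 4 → ℝ) : (Fin 4 → ℝ) →L[ℝ] ℝ :=
  p 0 • .proj 0 - p 1 • .proj 1 - p 2 • .proj 2 - p 3 • .proj 3

lemma mink4CLM_apply (p v : Fin 4 → ℝ) : mink4CLM p v = mink4 p v := by
  simp [mink4CLM, mink4]

lemma mink4CLM_single (p : Fin 4 → ℝ) (a : Fin 4) : mink4CLM p (Pi.single a 1) = low p a := by
  fin_cases a <;> simp [mink4CLM, low]

lemma mink4_smul_right (p y : Fin 4 → ℝ) (r : ℝ) : mink4 p (r • y) = r * mink4 p y := by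
  simp only [mink4, Pi.smul_apply, smul_eq_mul]
  ring

lemma hasFDerivAt_mink4_right (p z : Fin 4 → ℝ) : HasFDerivAt (mink4 p) (mink4CLM p) z :=
  (mink4CLM p).hasFDerivAt.congr_of_eventuallyEq (.of_forall fun y => (mink4CLM_apply p y).symm)

lemma hasFDerivAt_mink4_self (z : Fin 4 → ℝ) :
    HasFDerivAt (fun y => mink4 y y) ((2 : ℝ) • mink4CLM z) z := by
  have h (i : Fin 4) := (hasFDerivAt_apply i z).mul (hasFDerivAt_apply (𝕜 := ℝ) i z)
  refine ((((h 0).sub (h 1)).sub (h 2)).sub (h 3)).congr_fderiv ?_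
  ext v
  simp only [Fin.isValue, sub_apply, add_apply,
    smul_apply, ContinuousLinearMap.proj_apply, smul_eq_mul, mink4CLM]
  ring

lemma hasFDerivAt_inv_sqrt_neg_mink4_mul (q x : Fin 4 → ℝ) (hx : mink4 x x < 0) :
    HasFDerivAt (fun y => (√(-mink4 y y))⁻¹ * mink4 q y)
      ((√(-mink4 x x))⁻¹ • mink4CLM q - (mink4 q x / (mink4 x x * √(-mink4 x x))) • mink4CLM x)
      x := by
  have hS : 0 < √(-mink4 x x) := Real.sqrt_pos.2 (by linarith)
  have hsqrt := (hasFDerivAt_mink4_self x).neg.sqrt (neg_ne_zero.2 hx.ne)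
  refine (((hasDerivAt_inv hS.ne').comp_hasFDerivAt x hsqrt).mul
    (hasFDerivAt_mink4_right q x)).congr_fderiv ?_
  have hS2 : √(-mink4 x x) ^ 2 = -mink4 x x := Real.sq_sqrt (by linarith)
  ext v
  simp only [Pi.neg_apply, Function.comp_apply, one_div, mul_inv_rev, smul_neg, neg_smul,
    neg_neg, add_apply, smul_apply, mink4CLM_apply,
    smul_eq_mul, sub_apply]
  field_simp
  rw [hS2]
  field_simp [hx.ne]
  ring

theorem log_gradient_identity (q x : Fin 4 → ℝ)
    (hq : 0 < mink4 q q) (hx : mink4 x x < 0) :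
    (0 < mink4 q ((Real.sqrt (-(mink4 x x)))⁻¹ • x) +
        Real.sqrt ((mink4 q ((Real.sqrt (-(mink4 x x)))⁻¹ • x)) ^ 2 + mink4 q q)) ∧
    ∀ a : Fin 4,
      fderiv ℝ
          (fun y : Fin 4 → ℝ =>
            Real.log (mink4 q ((Real.sqrt (-(mink4 y y)))⁻¹ • y) +
              Real.sqrt ((mink4 q ((Real.sqrt (-(mink4 y y)))⁻¹ • y)) ^ 2 + mink4 q q)))
          x (Pi.single a 1) =
        low q a * ((mink4 q x) ^ 2 - mink4 q q * mink4 x x) ^ (-(1 : ℝ) / 2) -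
          mink4 q x * low x a * (mink4 x x)⁻¹ *
            ((mink4 q x) ^ 2 - mink4 q q * mink4 x x) ^ (-(1 : ℝ) / 2) := by
  refine ⟨add_sqrt_sq_add_pos _ hq, fun a => ?_⟩
  have hfun : (fun y : Fin 4 → ℝ =>
      log (mink4 q ((√(-(mink4 y y)))⁻¹ • y) +
        √((mink4 q ((√(-(mink4 y y)))⁻¹ • y)) ^ 2 + mink4 q q))) =
      (fun t => log (t + √(t ^ 2 + mink4 q q))) ∘ fun y => (√(-mink4 y y))⁻¹ * mink4 q y := by
    funext y
    simp only [Function.comp_apply, mink4_smul_right]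
  have hF := (hasDerivAt_log_add_sqrt_sq_add _ hq).comp_hasFDerivAt x
    (hasFDerivAt_inv_sqrt_neg_mink4_mul q x hx)
  have hD : 0 < (mink4 q x) ^ 2 - mink4 q q * mink4 x x := by nlinarith [sq_nonneg (mink4 q x)]
  have hrpow : ((mink4 q x) ^ 2 - mink4 q q * mink4 x x) ^ (-(1 : ℝ) / 2) =
      (√((mink4 q x) ^ 2 - mink4 q q * mink4 x x))⁻¹ := by
    rw [neg_div, Real.rpow_neg hD.le, Real.sqrt_eq_rpow]
  rw [hfun, hF.fderiv, hrpow]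
  simp only [sqrt_sq_inv_sqrt_neg_mul_add hx, inv_div, smul_apply,
    sub_apply, mink4CLM_single, smul_eq_mul]
  have hS : 0 < √(-mink4 x x) := Real.sqrt_pos.2 (by linarith)
  have hR : 0 < √((mink4 q x) ^ 2 - mink4 q q * mink4 x x) := Real.sqrt_pos.2 hD
  field_simp

end
end

section
/- Let U ⊂ ℝ⁴ be an open neighborhood of C₊ invariant under multiplication by positive scalars, and let f: U → ℂ⁴ be smooth with f(λl) = λ^{-1} f(l) for all λ > 0 and l ∈ U, and l·f(l) = 0 (Minkowski product) on U. Then for every l ∈ U with l·l = 0 and all indices a,c ∈ {0,1,2,3}: (l_c ∂^b − l^b ∂_c)(l_a f_b − l_b f_a)(l) = l_a l_c (∂·f)(l) + l_a f_c(l) − l_c f_a(l), where summation over b is understood, ∂^b = η^{bd} ∂/∂l^d, f_a = η_{ab} f^b, and ∂·f = Σ_a ∂f^a/∂l^a. In particular the restriction of ∂·f to the cone l·l = 0 does not depend on the choice of extension of f off the cone within this class. -/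
/-!
Statement 17: for `f` smooth near the light cone, homogeneous of degree `−1` and with
`l·f(l) = 0`, on the cone `l·l = 0` one has
`(l_c ∂^b − l^b ∂_c)(l_a f_b − l_b f_a) = l_a l_c (∂·f) + l_a f_c − l_c f_a`.
-/

open Real

noncomputable section

/-- Minkowski pairing of a real vector with a complex vector. -/
def minkC (x : Fin 4 → ℝ) (v : Fin 4 → ℂ) : ℂ :=
  (x 0 : ℂ) * v 0 - (x 1 : ℂ) * v 1 - (x 2 : ℂ) * v 2 - (x 3 : ℂ) * v 3

/-- Index lowering on complex vectors. -/
def lowC (v : Fin 4 → ℂ) (a : Fin 4) : ℂ := if a = 0 then v 0 else -(v a)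

/-- The diagonal entries of `η = diag(1,−1,−1,−1)`. -/
def eta (a : Fin 4) : ℝ := if a = 0 then 1 else -1


lemma low_eq (x : Fin 4 → ℝ) (a : Fin 4) : low x a = eta a * x a := by
  unfold low eta; split_ifs with h <;> simp [h]

lemma lowC_eq (v : Fin 4 → ℂ) (a : Fin 4) : lowC v a = ((eta a : ℝ) : ℂ) * v a := by
  unfold lowC eta; split_ifs with h <;> simp [h]

lemma lowcast_eq (x : Fin 4 → ℝ) (a : Fin 4) :
    ((low x a : ℝ) : ℂ) = ((eta a : ℝ) : ℂ) * ((x a : ℝ) : ℂ) := by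
  rw [low_eq]; push_cast; ring

lemma coordC_hasFDerivAt (j : Fin 4) (l : Fin 4 → ℝ) :
    HasFDerivAt (fun y : Fin 4 → ℝ => ((y j : ℝ) : ℂ))
      (Complex.ofRealCLM.comp (ContinuousLinearMap.proj j)) l := by
  have h := (Complex.ofRealCLM.comp
      (ContinuousLinearMap.proj (R := ℝ) (φ := fun _ : Fin 4 => ℝ) j)).hasFDerivAt (x := l)
  exact h

lemma coordC_diff (j : Fin 4) (l : Fin 4 → ℝ) :
    DifferentiableAt ℝ (fun y : Fin 4 → ℝ => ((y j : ℝ) : ℂ)) l :=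
  (coordC_hasFDerivAt j l).differentiableAt

lemma coordC_fderiv (j : Fin 4) (l : Fin 4 → ℝ) (v : Fin 4 → ℝ) :
    fderiv ℝ (fun y : Fin 4 → ℝ => ((y j : ℝ) : ℂ)) l v = ((v j : ℝ) : ℂ) := by
  rw [(coordC_hasFDerivAt j l).fderiv]; rfl

lemma fderiv_coord_mul (f : (Fin 4 → ℝ) → (Fin 4 → ℂ)) (l : Fin 4 → ℝ) (j b d : Fin 4)
    (hd : DifferentiableAt ℝ (fun y => f y b) l) :
    fderiv ℝ (fun y : Fin 4 → ℝ => ((y j : ℝ) : ℂ) * f y b) l (Pi.single d 1)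
      = (if j = d then f l b else 0)
        + ((l j : ℝ) : ℂ) * fderiv ℝ (fun y => f y b) l (Pi.single d 1) := by
  rw [fderiv_fun_mul (coordC_diff j l) hd]
  simp only [ContinuousLinearMap.add_apply, ContinuousLinearMap.smul_apply, smul_eq_mul,
    coordC_fderiv, Pi.single_apply]
  split_ifs <;> push_cast <;> ring

lemma fderiv_pair (f : (Fin 4 → ℝ) → (Fin 4 → ℂ)) (l : Fin 4 → ℝ)
    (hd : ∀ j, DifferentiableAt ℝ (fun y => f y j) l) (a b d : Fin 4) :
    fderiv ℝ (fun y : Fin 4 → ℝ =>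
        ((low y a : ℝ) : ℂ) * lowC (f y) b - ((low y b : ℝ) : ℂ) * lowC (f y) a) l
      (Pi.single d 1)
    = ((eta a : ℝ) : ℂ) * ((eta b : ℝ) : ℂ) *
        ((if a = d then f l b else 0)
          + ((l a : ℝ) : ℂ) * fderiv ℝ (fun y => f y b) l (Pi.single d 1)
          - (if b = d then f l a else 0)
          - ((l b : ℝ) : ℂ) * fderiv ℝ (fun y => f y a) l (Pi.single d 1)) := by
  have hrw : (fun y : Fin 4 → ℝ =>
        ((low y a : ℝ) : ℂ) * lowC (f y) b - ((low y b : ℝ) : ℂ) * lowC (f y) a)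
      = fun y : Fin 4 → ℝ =>
          (((eta a : ℝ) : ℂ) * ((eta b : ℝ) : ℂ)) * (((y a : ℝ) : ℂ) * f y b)
          - (((eta a : ℝ) : ℂ) * ((eta b : ℝ) : ℂ)) * (((y b : ℝ) : ℂ) * f y a) := by
    funext y
    rw [lowcast_eq, lowcast_eq, lowC_eq, lowC_eq]; ring
  rw [hrw]
  have dab : DifferentiableAt ℝ (fun y : Fin 4 → ℝ => ((y a : ℝ) : ℂ) * f y b) l :=
    (coordC_diff a l).mul (hd b)
  have dba : DifferentiableAt ℝ (fun y : Fin 4 → ℝ => ((y b : ℝ) : ℂ) * f y a) l :=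
    (coordC_diff b l).mul (hd a)
  rw [fderiv_fun_sub (dab.const_mul _) (dba.const_mul _), fderiv_const_mul dab,
    fderiv_const_mul dba]
  simp only [ContinuousLinearMap.sub_apply, ContinuousLinearMap.smul_apply, smul_eq_mul]
  rw [fderiv_coord_mul f l a b d (hd b), fderiv_coord_mul f l b a d (hd a)]
  ring

theorem cone_antisymmetric_derivative_identity (U : Set (Fin 4 → ℝ)) (hUopen : IsOpen U)
    (hUcone : {l : Fin 4 → ℝ | mink4 l l = 0 ∧ 0 < l 0} ⊆ U)
    (hUscale : ∀ lam : ℝ, 0 < lam → ∀ l ∈ U, lam • l ∈ U)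
    (f : (Fin 4 → ℝ) → (Fin 4 → ℂ)) (hf : ContDiffOn ℝ (⊤ : ℕ∞) f U)
    (hhom : ∀ lam : ℝ, 0 < lam → ∀ l ∈ U, f (lam • l) = ((lam : ℂ)⁻¹) • f l)
    (horth : ∀ l ∈ U, minkC l (f l) = 0) :
    ∀ l ∈ U, mink4 l l = 0 → ∀ a c : Fin 4,
      (∑ b : Fin 4,
        (((low l c : ℝ) : ℂ) * ((eta b : ℝ) : ℂ) *
            fderiv ℝ
              (fun y : Fin 4 → ℝ =>
                ((low y a : ℝ) : ℂ) * lowC (f y) b - ((low y b : ℝ) : ℂ) * lowC (f y) a)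
              l (Pi.single b 1) -
          ((l b : ℝ) : ℂ) *
            fderiv ℝ
              (fun y : Fin 4 → ℝ =>
                ((low y a : ℝ) : ℂ) * lowC (f y) b - ((low y b : ℝ) : ℂ) * lowC (f y) a)
              l (Pi.single c 1))) =
      ((low l a : ℝ) : ℂ) * ((low l c : ℝ) : ℂ) *
          (∑ d : Fin 4, fderiv ℝ (fun y => f y d) l (Pi.single d 1)) +
        ((low l a : ℝ) : ℂ) * lowC (f l) c - ((low l c : ℝ) : ℂ) * lowC (f l) a  := by
  intro l hlU hcone a c
  have hnl : U ∈ nhds l := hUopen.mem_nhds hlU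
  have hfd : DifferentiableAt ℝ f l := (hf.contDiffAt hnl).differentiableAt (by simp)
  have hd : ∀ j, DifferentiableAt ℝ (fun y => f y j) l := differentiableAt_pi.1 hfd
  have hcomp : ∀ (j : Fin 4) (v : Fin 4 → ℝ),
      fderiv ℝ (fun y => f y j) l v = fderiv ℝ f l v j := by
    intro j v
    have h := ((ContinuousLinearMap.proj (R := ℝ) (φ := fun _ : Fin 4 => ℂ)
        j).hasFDerivAt.comp l hfd.hasFDerivAt).fderiv
    have h2 : fderiv ℝ (fun y => f y j) l
        = (ContinuousLinearMap.proj (R := ℝ) (φ := fun _ : Fin 4 => ℂ) j).comp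
            (fderiv ℝ f l) := by
      rw [← h]; rfl
    rw [h2]; rfl
  have hEuler : fderiv ℝ f l l = -f l := by
    have hsm : HasDerivAt (fun t : ℝ => t • l) l 1 := by
      simpa using (hasDerivAt_id (1 : ℝ)).smul_const l
    have hL : HasDerivAt (fun t : ℝ => f (t • l)) (fderiv ℝ f l l) 1 := by
      have hfd' : HasFDerivAt f (fderiv ℝ f l) ((1 : ℝ) • l) := by
        simpa using hfd.hasFDerivAt
      exact hfd'.comp_hasDerivAt 1 hsm
    have hinv : HasDerivAt (fun t : ℝ => ((t : ℂ))⁻¹) (-1 : ℂ) 1 := by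
      have h1 : HasDerivAt (fun z : ℂ => z⁻¹) (-((1 : ℂ) ^ 2)⁻¹) ((1 : ℝ) : ℂ) := by
        simpa using hasDerivAt_inv (one_ne_zero (α := ℂ))
      simpa using HasDerivAt.comp_ofReal h1
    have hR : HasDerivAt (fun t : ℝ => ((t : ℂ))⁻¹ • f l) ((-1 : ℂ) • f l) 1 :=
      hinv.smul_const (f l)
    have heq : (fun t : ℝ => f (t • l)) =ᶠ[nhds 1] fun t : ℝ => ((t : ℂ))⁻¹ • f l := by
      filter_upwards [eventually_gt_nhds zero_lt_one] with t ht
      exact hhom t ht l hlU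
    have hu := hL.unique (hR.congr_of_eventuallyEq heq)
    rw [hu]; simp
  -- Euler in components
  have hE : ∀ j : Fin 4,
      ((l 0 : ℝ) : ℂ) * fderiv ℝ (fun y => f y j) l (Pi.single 0 1)
      + ((l 1 : ℝ) : ℂ) * fderiv ℝ (fun y => f y j) l (Pi.single 1 1)
      + ((l 2 : ℝ) : ℂ) * fderiv ℝ (fun y => f y j) l (Pi.single 2 1)
      + ((l 3 : ℝ) : ℂ) * fderiv ℝ (fun y => f y j) l (Pi.single 3 1) = -(f l j) := by
    intro j
    have h1 : fderiv ℝ (fun y => f y j) l l = -(f l j) := by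
      rw [hcomp j l, hEuler]; rfl
    have hlrep : (∑ d : Fin 4, l d • (Pi.single d 1 : Fin 4 → ℝ)) = l := by
      ext i
      simp [Pi.single_apply, Finset.sum_ite_eq]
    have h2 : fderiv ℝ (fun y => f y j) l l
        = ∑ d : Fin 4, l d • fderiv ℝ (fun y => f y j) l (Pi.single d 1) := by
      have hstep : fderiv ℝ (fun y => f y j) l l
          = fderiv ℝ (fun y => f y j) l (∑ d : Fin 4, l d • (Pi.single d 1 : Fin 4 → ℝ)) := by
        rw [hlrep]
      rw [hstep, map_sum]
      exact Finset.sum_congr rfl fun d _ => (fderiv ℝ (fun y => f y j) l).map_smul _ _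
    rw [h2, Fin.sum_univ_four] at h1
    simpa [Complex.real_smul] using h1
  -- derivative of the orthogonality relation
  have hG0 : fderiv ℝ (fun y => minkC y (f y)) l = 0 := by
    have heq : (fun y => minkC y (f y)) =ᶠ[nhds l] fun _ => (0 : ℂ) := by
      filter_upwards [hnl] with y hy using horth y hy
    rw [heq.fderiv_eq]
    exact fderiv_const_apply 0
  have hO : ∀ d : Fin 4,
      ((if (0 : Fin 4) = d then f l 0 else 0)
        + ((l 0 : ℝ) : ℂ) * fderiv ℝ (fun y => f y 0) l (Pi.single d 1))
      - ((if (1 : Fin 4) = d then f l 1 else 0)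
        + ((l 1 : ℝ) : ℂ) * fderiv ℝ (fun y => f y 1) l (Pi.single d 1))
      - ((if (2 : Fin 4) = d then f l 2 else 0)
        + ((l 2 : ℝ) : ℂ) * fderiv ℝ (fun y => f y 2) l (Pi.single d 1))
      - ((if (3 : Fin 4) = d then f l 3 else 0)
        + ((l 3 : ℝ) : ℂ) * fderiv ℝ (fun y => f y 3) l (Pi.single d 1)) = 0 := by
    intro d
    have h0 : fderiv ℝ (fun y => minkC y (f y)) l (Pi.single d 1) = 0 := by
      rw [hG0]; rfl
    have d0 : DifferentiableAt ℝ (fun y : Fin 4 → ℝ => ((y 0 : ℝ) : ℂ) * f y 0) l :=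
      (coordC_diff 0 l).mul (hd 0)
    have d1 : DifferentiableAt ℝ (fun y : Fin 4 → ℝ => ((y 1 : ℝ) : ℂ) * f y 1) l :=
      (coordC_diff 1 l).mul (hd 1)
    have d2 : DifferentiableAt ℝ (fun y : Fin 4 → ℝ => ((y 2 : ℝ) : ℂ) * f y 2) l :=
      (coordC_diff 2 l).mul (hd 2)
    have d3 : DifferentiableAt ℝ (fun y : Fin 4 → ℝ => ((y 3 : ℝ) : ℂ) * f y 3) l :=
      (coordC_diff 3 l).mul (hd 3)
    have hrw : (fun y : Fin 4 → ℝ => minkC y (f y))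
        = fun y : Fin 4 → ℝ => ((y 0 : ℝ) : ℂ) * f y 0 - ((y 1 : ℝ) : ℂ) * f y 1
            - ((y 2 : ℝ) : ℂ) * f y 2 - ((y 3 : ℝ) : ℂ) * f y 3 := rfl
    rw [hrw, fderiv_fun_sub ((d0.fun_sub d1).fun_sub d2) d3, fderiv_fun_sub (d0.fun_sub d1) d2,
      fderiv_fun_sub d0 d1] at h0
    simp only [ContinuousLinearMap.sub_apply] at h0
    rw [fderiv_coord_mul f l 0 0 d (hd 0), fderiv_coord_mul f l 1 1 d (hd 1),
      fderiv_coord_mul f l 2 2 d (hd 2), fderiv_coord_mul f l 3 3 d (hd 3)] at h0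
    linear_combination h0
  have hO0 := hO 0
  have hO1 := hO 1
  have hO2 := hO 2
  have hO3 := hO 3
  simp only [Fin.reduceEq, reduceIte, Fin.isValue] at hO0 hO1 hO2 hO3
  have hOrthC : ((l 0 : ℝ) : ℂ) * f l 0 - ((l 1 : ℝ) : ℂ) * f l 1
      - ((l 2 : ℝ) : ℂ) * f l 2 - ((l 3 : ℝ) : ℂ) * f l 3 = 0 := horth l hlU
  have hconeC : ((l 0 : ℝ) : ℂ) * ((l 0 : ℝ) : ℂ) - ((l 1 : ℝ) : ℂ) * ((l 1 : ℝ) : ℂ)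
      - ((l 2 : ℝ) : ℂ) * ((l 2 : ℝ) : ℂ) - ((l 3 : ℝ) : ℂ) * ((l 3 : ℝ) : ℂ) = 0 := by
    have h := congrArg (fun r : ℝ => (r : ℂ)) hcone
    unfold mink4 at h
    push_cast at h
    linear_combination h
  rw [Fin.sum_univ_four, Fin.sum_univ_four]
  simp only [fderiv_pair f l hd]
  simp only [lowcast_eq, lowC_eq]
  fin_cases a <;> fin_cases c <;>
    simp only [eta, Fin.zero_eta, Fin.mk_one, Fin.reduceFinMk, Fin.reduceEq, reduceIte,
      Fin.isValue, Complex.ofReal_one, Complex.ofReal_neg]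
  · linear_combination (-1 : ℂ) * ((l 0 : ℝ) : ℂ) * hE 0 + (-1 : ℂ) * ((l 0 : ℝ) : ℂ) * hO0 + (-1 : ℂ) * hOrthC + (1 : ℂ) * (fderiv ℝ (fun y => f y 0) l (Pi.single 0 1)) * hconeC
  · linear_combination (1 : ℂ) * ((l 1 : ℝ) : ℂ) * hE 0 + (-1 : ℂ) * ((l 0 : ℝ) : ℂ) * hO1 + (1 : ℂ) * (fderiv ℝ (fun y => f y 0) l (Pi.single 1 1)) * hconeC
  · linear_combination (1 : ℂ) * ((l 2 : ℝ) : ℂ) * hE 0 + (-1 : ℂ) * ((l 0 : ℝ) : ℂ) * hO2 + (1 : ℂ) * (fderiv ℝ (fun y => f y 0) l (Pi.single 2 1)) * hconeC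
  · linear_combination (1 : ℂ) * ((l 3 : ℝ) : ℂ) * hE 0 + (-1 : ℂ) * ((l 0 : ℝ) : ℂ) * hO3 + (1 : ℂ) * (fderiv ℝ (fun y => f y 0) l (Pi.single 3 1)) * hconeC
  · linear_combination (1 : ℂ) * ((l 0 : ℝ) : ℂ) * hE 1 + (1 : ℂ) * ((l 1 : ℝ) : ℂ) * hO0 + (-1 : ℂ) * (fderiv ℝ (fun y => f y 1) l (Pi.single 0 1)) * hconeC
  · linear_combination (-1 : ℂ) * ((l 1 : ℝ) : ℂ) * hE 1 + (1 : ℂ) * ((l 1 : ℝ) : ℂ) * hO1 + (1 : ℂ) * hOrthC + (-1 : ℂ) * (fderiv ℝ (fun y => f y 1) l (Pi.single 1 1)) * hconeC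
  · linear_combination (-1 : ℂ) * ((l 2 : ℝ) : ℂ) * hE 1 + (1 : ℂ) * ((l 1 : ℝ) : ℂ) * hO2 + (-1 : ℂ) * (fderiv ℝ (fun y => f y 1) l (Pi.single 2 1)) * hconeC
  · linear_combination (-1 : ℂ) * ((l 3 : ℝ) : ℂ) * hE 1 + (1 : ℂ) * ((l 1 : ℝ) : ℂ) * hO3 + (-1 : ℂ) * (fderiv ℝ (fun y => f y 1) l (Pi.single 3 1)) * hconeC
  · linear_combination (1 : ℂ) * ((l 0 : ℝ) : ℂ) * hE 2 + (1 : ℂ) * ((l 2 : ℝ) : ℂ) * hO0 + (-1 : ℂ) * (fderiv ℝ (fun y => f y 2) l (Pi.single 0 1)) * hconeC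
  · linear_combination (-1 : ℂ) * ((l 1 : ℝ) : ℂ) * hE 2 + (1 : ℂ) * ((l 2 : ℝ) : ℂ) * hO1 + (-1 : ℂ) * (fderiv ℝ (fun y => f y 2) l (Pi.single 1 1)) * hconeC
  · linear_combination (-1 : ℂ) * ((l 2 : ℝ) : ℂ) * hE 2 + (1 : ℂ) * ((l 2 : ℝ) : ℂ) * hO2 + (1 : ℂ) * hOrthC + (-1 : ℂ) * (fderiv ℝ (fun y => f y 2) l (Pi.single 2 1)) * hconeC
  · linear_combination (-1 : ℂ) * ((l 3 : ℝ) : ℂ) * hE 2 + (1 : ℂ) * ((l 2 : ℝ) : ℂ) * hO3 + (-1 : ℂ) * (fderiv ℝ (fun y => f y 2) l (Pi.single 3 1)) * hconeC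
  · linear_combination (1 : ℂ) * ((l 0 : ℝ) : ℂ) * hE 3 + (1 : ℂ) * ((l 3 : ℝ) : ℂ) * hO0 + (-1 : ℂ) * (fderiv ℝ (fun y => f y 3) l (Pi.single 0 1)) * hconeC
  · linear_combination (-1 : ℂ) * ((l 1 : ℝ) : ℂ) * hE 3 + (1 : ℂ) * ((l 3 : ℝ) : ℂ) * hO1 + (-1 : ℂ) * (fderiv ℝ (fun y => f y 3) l (Pi.single 1 1)) * hconeC
  · linear_combination (-1 : ℂ) * ((l 2 : ℝ) : ℂ) * hE 3 + (1 : ℂ) * ((l 3 : ℝ) : ℂ) * hO2 + (-1 : ℂ) * (fderiv ℝ (fun y => f y 3) l (Pi.single 2 1)) * hconeC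
  · linear_combination (-1 : ℂ) * ((l 3 : ℝ) : ℂ) * hE 3 + (1 : ℂ) * ((l 3 : ℝ) : ℂ) * hO3 + (1 : ℂ) * hOrthC + (-1 : ℂ) * (fderiv ℝ (fun y => f y 3) l (Pi.single 3 1)) * hconeC

end
end
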